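/- Let 𝔄 be a p-structure and fix a ∈ L^p(X,V). Define T : L^p_+(X) → L^q_+(X) by Tα := Π_+(𝔄(·, a+α)) (this is meaningful because |𝔄(x,v)| ≲ |v|^{p−1} implies 𝔄(·, a+α) ∈ L^q(X,V), and Π_+ is bounded on L^q). Then: (1) T is continuous; (2) T is strictly monotone, i.e. ∫_X ⟨Tα₁ − Tα₂ | α₁ − α₂⟩ dx > 0 whenever α₁ ≠ α₂ in L^p_+(X); and (3) T is coercive, i.e. ∫_X ⟨Tα | α⟩ dx / ‖α‖_p → ∞ as ‖α‖_p → ∞ with α ∈ L^p_+(X). -/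

import Mathlib

open MeasureTheory ENNReal
open scoped RealInnerProductSpace

noncomputable section

variable {X : Type*} [MeasurableSpace X] {V : Type*}
  [NormedAddCommGroup V] [InnerProductSpace ℝ V] [FiniteDimensional ℝ V]
  [MeasurableSpace V] [BorelSpace V]

/-- Membership in `L^s(X, V)` for a real exponent `s`. -/
def MemLs (μ : Measure X) (s : ℝ) (f : X → V) : Prop :=
  MemLp f (ENNReal.ofReal s) μ

/-- Membership in `L^*(X) = ⋂_{1 ≤ s ≤ ∞} L^s(X, V)`. -/
def MemLstar (μ : Measure X) (f : X → V) : Prop :=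
  MemLp f ⊤ μ ∧ ∀ s : ℝ, 1 ≤ s → MemLp f (ENNReal.ofReal s) μ

/-- The orthogonal complement in `L²(X, V)` of a set `K` of functions, at the level of
functions: all `g ∈ L²` whose inner product with every member of `K` integrates to `0`. -/
def OrthCompl (μ : Measure X) (K : Set (X → V)) : Set (X → V) :=
  {g | MemLp g 2 μ ∧ ∀ f ∈ K, ∫ x, ⟪f x, g x⟫ ∂μ = 0}

/-- `K` is (the set of representatives of) a closed linear subspace of `L²(X, V)`. -/
structure IsClosedL2Subspace (μ : Measure X) (K : Set (X → V)) : Prop where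
  mem_L2 : ∀ f ∈ K, MemLp f 2 μ
  zero_mem : (0 : X → V) ∈ K
  add_mem : ∀ ⦃f⦄, f ∈ K → ∀ ⦃g⦄, g ∈ K → f + g ∈ K
  smul_mem : ∀ (c : ℝ) ⦃f⦄, f ∈ K → c • f ∈ K
  ae_mem : ∀ ⦃f⦄, f ∈ K → ∀ ⦃g : X → V⦄, f =ᵐ[μ] g → g ∈ K
  closed : ∀ ⦃f : X → V⦄, MemLp f 2 μ →
    (∀ ε : ℝ, 0 < ε → ∃ g ∈ K, eLpNorm (f - g) 2 μ < ENNReal.ofReal ε) → f ∈ K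

/-- `LsCl μ K s` is the closure of `K ∩ L^s(X,V)` in the `L^s`-norm: the space `L^s_+(X)`
(for `K = L²_+`) resp. `L^s_-(X)` (for `K = L²_-`) of the paper. -/
def LsCl (μ : Measure X) (K : Set (X → V)) (s : ℝ) : Set (X → V) :=
  {f | MemLs μ s f ∧ ∀ ε : ℝ, 0 < ε → ∃ g ∈ K, MemLs μ s g ∧
        eLpNorm (f - g) (ENNReal.ofReal s) μ < ENNReal.ofReal ε}

/-- The orthogonal projections `Π₊` onto `K` and `Π₋ = I - Π₊` are bounded in the `L^s`-norm:
whenever `ω ∈ L² ∩ L^s` is decomposed as `ω = α + (ω - α)` with `α ∈ K` and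
`ω - α ⟂ K`, both pieces obey an `L^s` bound. -/
def ProjBounded (μ : Measure X) (K : Set (X → V)) (s : ℝ) : Prop :=
  ∃ M : ℝ, ∀ ω α : X → V, MemLp ω 2 μ → MemLs μ s ω → α ∈ K →
    (ω - α) ∈ OrthCompl μ K →
    eLpNorm α (ENNReal.ofReal s) μ ≤ ENNReal.ofReal M * eLpNorm ω (ENNReal.ofReal s) μ ∧
    eLpNorm (ω - α) (ENNReal.ofReal s) μ ≤ ENNReal.ofReal M * eLpNorm ω (ENNReal.ofReal s) μ

/-- `A : X × V → V` is a `p`-structure: Carathéodory regular, `(p−1)`-homogeneous,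
Lipschitz and monotone (with the rpow convention for the degenerate case `v₁ = v₂ = 0`
when `p < 2`). -/
structure IsPStructure (μ : Measure X) (p : ℝ) (A : X → V → V) (CA cA : ℝ) : Prop where
  measurable_x : ∀ v : V, Measurable fun x => A x v
  continuous_v : ∀ᵐ x ∂μ, Continuous fun v => A x v
  homog : ∀ᵐ x ∂μ, ∀ l : ℝ, 0 ≤ l → ∀ v : V, A x (l • v) = l ^ (p - 1) • A x v
  lipschitz : ∀ᵐ x ∂μ, ∀ v₁ v₂ : V,
    ‖A x v₁ - A x v₂‖ ≤ CA * ((‖v₁‖ + ‖v₂‖) ^ (p - 2) * ‖v₁ - v₂‖)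
  monotone : ∀ᵐ x ∂μ, ∀ v₁ v₂ : V,
    cA * ((‖v₁‖ + ‖v₂‖) ^ (p - 2) * ‖v₁ - v₂‖ ^ (2 : ℝ)) ≤ ⟪A x v₁ - A x v₂, v₁ - v₂⟫

/-- `(α, β) = ℜf` solves the `(p,q)`-system for the data `f = (a, b)`:
`α ∈ L^p_+(X)`, `β ∈ L^q_-(X)` and `𝔄(x, a+α) = b+β` a.e. -/
def Solves (μ : Measure X) (K : Set (X → V)) (A : X → V → V) (p q : ℝ)
    (a b α β : X → V) : Prop :=
  α ∈ LsCl μ K p ∧ β ∈ LsCl μ (OrthCompl μ K) q ∧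
    (fun x => A x (a x + α x)) =ᵐ[μ] fun x => b x + β x

/-- The bracket `[f] = |a|^p + |b|^q` of a pair `f = (a, b)`. -/
def br (p q : ℝ) (a b : X → V) (x : X) : ℝ :=
  ‖a x‖ ^ p + ‖b x‖ ^ q

/-- The operator `ℜ` is of weak `λ`-type: for data `f = (a,b) ∈ L^* × L^*`, the solution
`ℜf = (α,β)` lies in `L^{λp} × L^{λq}` and satisfies
`meas{x : [ℜf(x)] > t} ≤ C t^{−λ} ∫ [f]^λ` for all `t > 0`. -/
def WeakType (μ : Measure X) (K : Set (X → V)) (A : X → V → V) (p q lam : ℝ) : Prop :=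
  ∃ C : ℝ, ∀ a b α β : X → V, MemLstar μ a → MemLstar μ b →
    Solves μ K A p q a b α β →
    MemLs μ (lam * p) α ∧ MemLs μ (lam * q) β ∧
    ∀ t : ℝ, 0 < t →
      μ {x | t < br p q α β x} ≤
        ENNReal.ofReal (C * t ^ (-lam) * ∫ x, br p q a b x ^ lam ∂μ)


/-!
Pairing with `L^p_+` does not see the `L^q_-` part, so `∫ ⟨Tα | γ⟩ = ∫ ⟨𝔄(·, a+α) | γ⟩` for all
`γ ∈ L^p_+` (by density and Hölder). Since `q ≤ p` forces `p ≥ 2`, the monotonicity of `𝔄` gives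
`⟨𝔄(v) − 𝔄(w) | v − w⟩ ≥ c |v − w|^p`: integrated, this is strict monotonicity, and together with
Hölder for the term `⟨𝔄(a) | α⟩` it is coercivity, `∫ ⟨Tα | α⟩ ≥ c ‖α‖_p^p − ‖𝔄(a)‖_q ‖α‖_p`.
For continuity, the `L^q` bound on `Π₊` passes from `L² ∩ L^q` to the closures, and the Lipschitz
condition with Hölder for the exponents `1/q = (p−2)/p + 1/p` gives
`‖𝔄(u) − 𝔄(v)‖_q ≤ C ‖|u| + |v|‖_p^{p−2} ‖u − v‖_p`.
-/

open Filter Topology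

lemma ENNReal.tendsto_mul_ofReal_nhdsGT_zero {c : ℝ≥0∞} (hc : c ≠ ⊤) :
    Tendsto (fun ε : ℝ => c * ENNReal.ofReal ε) (𝓝[>] 0) (𝓝 0) := by
  have hofReal : Tendsto ENNReal.ofReal (𝓝[>] 0) (𝓝 0) := by
    simpa using (ENNReal.continuous_ofReal.tendsto 0).mono_left nhdsWithin_le_nhds
  simpa using ENNReal.Tendsto.const_mul hofReal (Or.inr hc)

lemma ENNReal.le_of_forall_pos_le_add_mul {a b c : ℝ≥0∞} (hc : c ≠ ⊤)
    (h : ∀ ε : ℝ, 0 < ε → a ≤ b + c * ENNReal.ofReal ε) : a ≤ b := by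
  have hlim := (ENNReal.tendsto_mul_ofReal_nhdsGT_zero hc).const_add b
  rw [add_zero] at hlim
  exact ge_of_tendsto hlim (eventually_nhdsWithin_of_forall h)

lemma exists_mul_le_mul_rpow_sub_mul {c p : ℝ} (hc : 0 < c) (hp : 1 < p) (M C : ℝ) :
    ∃ R : ℝ, ∀ N : ℝ, R ≤ N → M * N ≤ c * N ^ p - C * N := by
  have hlim : Tendsto (fun N : ℝ => c * N ^ (p - 1) - C) atTop atTop :=
    tendsto_atTop_add_const_right _ _ ((tendsto_rpow_atTop (sub_pos.2 hp)).const_mul_atTop hc)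
  obtain ⟨R, hR⟩ := eventually_atTop.mp (hlim.eventually_ge_atTop M)
  refine ⟨max R 1, fun N hN => ?_⟩
  have hN0 : 0 < N := zero_lt_one.trans_le ((le_max_right R 1).trans hN)
  calc M * N ≤ (c * N ^ (p - 1) - C) * N := by gcongr; exact hR N (le_of_max_le_left hN)
    _ = c * N ^ p - C * N := by
      rw [sub_mul, mul_assoc, ← Real.rpow_add_one hN0.ne', sub_add_cancel]

lemma Real.HolderConjugate.two_le_of_le {p q : ℝ} (h : p.HolderConjugate q) (hqp : q ≤ p) :
    2 ≤ p := by
  have hinv : p⁻¹ ≤ q⁻¹ := inv_anti₀ h.symm.pos hqp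
  have h2 : 2 * p⁻¹ ≤ 1 := by linarith [h.inv_add_inv_eq_one]
  rwa [← div_eq_mul_inv, div_le_one h.pos] at h2

section NormedGroup

variable {E F : Type*} [NormedAddCommGroup E] [NormedAddCommGroup F] {μ : Measure X}

lemma aestronglyMeasurable_comp_of_caratheodory [MeasurableSpace E] [BorelSpace E]
    [SecondCountableTopology E] [MeasurableSpace F] [BorelSpace F] [SecondCountableTopology F]
    {A : X → E → F} (hmeas : ∀ v, Measurable fun x => A x v)
    (hcont : ∀ᵐ x ∂μ, Continuous (A x)) {f : X → E} (hf : AEStronglyMeasurable f μ) :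
    AEStronglyMeasurable (fun x => A x (f x)) μ := by
  classical
  set N := toMeasurable μ {x | ¬Continuous (A x)}
  -- `A'` is continuous in `v` for every `x`, and agrees with `A` off the null set `N`
  let A' : X → E → F := fun x v => if x ∈ N then 0 else A x v
  have hA' : Measurable (Function.uncurry fun v x => A' x v) := by
    refine measurable_uncurry_of_continuous_of_measurable (fun x => ?_)
      fun v => Measurable.ite (measurableSet_toMeasurable μ _) measurable_const (hmeas v)
    by_cases hx : x ∈ N
    · simpa [A', hx] using continuous_const
    · simpa [A', hx] using not_not.mp (hx <| subset_toMeasurable μ _ ·)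
  have hN : ∀ᵐ x ∂μ, x ∉ N :=
    measure_eq_zero_iff_ae_notMem.mp (by rwa [measure_toMeasurable])
  refine (hA'.comp (hf.measurable_mk.prodMk measurable_id)).aestronglyMeasurable.congr ?_
  filter_upwards [hf.ae_eq_mk, hN] with x hfx hx
  simp [A', hx, hfx]

lemma MeasureTheory.MemLp.integral_norm_rpow_eq {f : X → E} {s : ℝ} (hs : 0 < s)
    (hf : MemLp f (ENNReal.ofReal s) μ) :
    ∫ x, ‖f x‖ ^ s ∂μ = (eLpNorm f (ENNReal.ofReal s) μ).toReal ^ s := by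
  rw [hf.eLpNorm_eq_integral_rpow_norm (by simpa using hs) ofReal_ne_top,
    ENNReal.toReal_ofReal (by positivity), ENNReal.toReal_ofReal hs.le,
    Real.rpow_inv_rpow (integral_nonneg fun x => by positivity) hs.ne']

lemma eLpNorm_norm_rpow_mul_le {f : X → E} {g : X → F} {p e : ℝ} (hp : 0 < p) (he : 0 ≤ e)
    (hf : AEStronglyMeasurable f μ) (hg : AEStronglyMeasurable g μ) :
    eLpNorm (fun x => ‖f x‖ ^ e * ‖g x‖) (ENNReal.ofReal (p / (e + 1))) μ ≤
      eLpNorm f (ENNReal.ofReal p) μ ^ e * eLpNorm g (ENNReal.ofReal p) μ := by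
  rcases he.eq_or_lt with rfl | he
  · simp
  have : ENNReal.HolderTriple (ENNReal.ofReal (p / e)) (ENNReal.ofReal p)
      (ENNReal.ofReal (p / (e + 1))) :=
    Real.HolderTriple.ennrealOfReal ⟨by field_simp, by positivity, hp⟩
  calc eLpNorm ((fun x => ‖f x‖ ^ e) • fun x => ‖g x‖) (ENNReal.ofReal (p / (e + 1))) μ
      ≤ eLpNorm (fun x => ‖f x‖ ^ e) (ENNReal.ofReal (p / e)) μ *
          eLpNorm (fun x => ‖g x‖) (ENNReal.ofReal p) μ :=
        eLpNorm_smul_le_mul_eLpNorm hg.norm (hf.norm.aemeasurable.pow_const e).aestronglyMeasurable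
    _ = _ := by
      rw [eLpNorm_norm_rpow f he, ← ENNReal.ofReal_mul (by positivity),
        div_mul_cancel₀ _ he.ne', eLpNorm_norm]

lemma eLpNorm_norm_add_norm_le {u v : X → E} {s : ℝ≥0∞} (hu : AEStronglyMeasurable u μ)
    (hv : AEStronglyMeasurable v μ) (hs : 1 ≤ s) :
    eLpNorm (fun x => ‖v x‖ + ‖u x‖) s μ ≤ 2 * eLpNorm u s μ + eLpNorm (v - u) s μ :=
  calc eLpNorm (fun x => ‖v x‖ + ‖u x‖) s μ
      ≤ eLpNorm (fun x => ‖v x‖) s μ + eLpNorm (fun x => ‖u x‖) s μ :=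
        eLpNorm_add_le hv.norm hu.norm hs
    _ = eLpNorm (u + (v - u)) s μ + eLpNorm u s μ := by
        rw [eLpNorm_norm, eLpNorm_norm, add_sub_cancel]
    _ ≤ eLpNorm u s μ + eLpNorm (v - u) s μ + eLpNorm u s μ := by
        gcongr
        exact eLpNorm_add_le hu (hv.sub hu) hs
    _ = 2 * eLpNorm u s μ + eLpNorm (v - u) s μ := by ring

lemma sub_mem_lsCl {K : Set (X → E)} {s : ℝ} (hs : 1 ≤ s)
    (hK : ∀ f ∈ K, ∀ g ∈ K, f - g ∈ K) {f g : X → E} (hf : f ∈ LsCl μ K s)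
    (hg : g ∈ LsCl μ K s) : f - g ∈ LsCl μ K s := by
  refine ⟨hf.1.sub hg.1, fun ε hε => ?_⟩
  obtain ⟨f', hf'K, hf'L, hff'⟩ := hf.2 (ε / 2) (half_pos hε)
  obtain ⟨g', hg'K, hg'L, hgg'⟩ := hg.2 (ε / 2) (half_pos hε)
  refine ⟨f' - g', hK f' hf'K g' hg'K, hf'L.sub hg'L, ?_⟩
  calc eLpNorm (f - g - (f' - g')) (ENNReal.ofReal s) μ
      = eLpNorm ((f - f') - (g - g')) (ENNReal.ofReal s) μ := by rw [sub_sub_sub_comm]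
    _ ≤ eLpNorm (f - f') (ENNReal.ofReal s) μ + eLpNorm (g - g') (ENNReal.ofReal s) μ :=
      eLpNorm_sub_le (hf.1.1.sub hf'L.1) (hg.1.1.sub hg'L.1) (by simpa using hs)
    _ < ENNReal.ofReal (ε / 2) + ENNReal.ofReal (ε / 2) := ENNReal.add_lt_add hff' hgg'
    _ = ENNReal.ofReal ε := by
      rw [← ENNReal.ofReal_add (by positivity) (by positivity), add_halves]

end NormedGroup

section InnerProduct

variable {E : Type*} [NormedAddCommGroup E] [InnerProductSpace ℝ E] {μ : Measure X}

section Holder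

variable {s t : ℝ≥0∞} [s.HolderConjugate t] {f g : X → E}

lemma MeasureTheory.MemLp.integrable_inner (hf : MemLp f s μ) (hg : MemLp g t μ) :
    Integrable (fun x => ⟪f x, g x⟫) μ :=
  memLp_one_iff_integrable.mp <| MemLp.of_bilin (fun v w => ⟪v, w⟫) 1 hf hg (hf.1.inner hg.1)
    (ae_of_all _ fun x => by simpa using nnnorm_inner_le_nnnorm (f x) (g x))

lemma enorm_integral_inner_le (hf : AEStronglyMeasurable f μ) (hg : AEStronglyMeasurable g μ) :
    ‖∫ x, ⟪f x, g x⟫ ∂μ‖ₑ ≤ eLpNorm f s μ * eLpNorm g t μ := by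
  calc ‖∫ x, ⟪f x, g x⟫ ∂μ‖ₑ ≤ eLpNorm (fun x => ⟪f x, g x⟫) 1 μ := by
        rw [eLpNorm_one_eq_lintegral_enorm]
        exact enorm_integral_le_lintegral_enorm _
    _ ≤ eLpNorm f s μ * eLpNorm g t μ := by
        simpa using eLpNorm_le_eLpNorm_mul_eLpNorm_of_nnnorm hf hg (fun v w => ⟪v, w⟫) 1
          (ae_of_all _ fun x => by simpa using nnnorm_inner_le_nnnorm (f x) (g x))

lemma abs_integral_inner_le (hf : MemLp f s μ) (hg : MemLp g t μ) :
    |∫ x, ⟪f x, g x⟫ ∂μ| ≤ (eLpNorm f s μ).toReal * (eLpNorm g t μ).toReal := by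
  have h := ENNReal.toReal_mono (ENNReal.mul_ne_top hf.2.ne hg.2.ne)
    (enorm_integral_inner_le hf.1 hg.1)
  rwa [toReal_enorm, Real.norm_eq_abs, ENNReal.toReal_mul] at h

end Holder

variable {K : Set (X → E)}

lemma IsClosedL2Subspace.sub_mem (hK : IsClosedL2Subspace μ K) {f g : X → E} (hf : f ∈ K)
    (hg : g ∈ K) : f - g ∈ K :=
  hK.ae_mem (hK.add_mem hf (hK.smul_mem (-1) hg)) (ae_of_all _ fun x => by simp [sub_eq_add_neg])

lemma sub_mem_orthCompl (hK : ∀ k ∈ K, MemLp k 2 μ) {f g : X → E} (hf : f ∈ OrthCompl μ K)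
    (hg : g ∈ OrthCompl μ K) : f - g ∈ OrthCompl μ K := by
  refine ⟨hf.1.sub hg.1, fun k hk => ?_⟩
  simp only [Pi.sub_apply, inner_sub_right]
  rw [integral_sub ((hK k hk).integrable_inner hf.1) ((hK k hk).integrable_inner hg.1),
    hf.2 k hk, hg.2 k hk, sub_self]

lemma integral_inner_eq_zero_of_mem_lsCl {s t : ℝ} (hst : s.HolderConjugate t) {f g : X → E}
    (hf : f ∈ LsCl μ K s) (hg : MemLp g (ENNReal.ofReal t) μ)
    (hK : ∀ f' ∈ K, MemLs μ s f' → ∫ x, ⟪f' x, g x⟫ ∂μ = 0) :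
    ∫ x, ⟪f x, g x⟫ ∂μ = 0 := by
  have := hst.ennrealOfReal
  refine enorm_eq_zero.mp <| nonpos_iff_eq_zero.mp <|
    ENNReal.le_of_forall_pos_le_add_mul hg.2.ne fun ε hε => ?_
  obtain ⟨f', hf'K, hf'L, hff'⟩ := hf.2 ε hε
  have hsplit : ∫ x, ⟪f x, g x⟫ ∂μ = ∫ x, ⟪(f - f') x, g x⟫ ∂μ := by
    simp only [Pi.sub_apply, inner_sub_left]
    rw [integral_sub (hf.1.integrable_inner hg) (hf'L.integrable_inner hg), hK f' hf'K hf'L,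
      sub_zero]
  calc ‖∫ x, ⟪f x, g x⟫ ∂μ‖ₑ
      = ‖∫ x, ⟪(f - f') x, g x⟫ ∂μ‖ₑ := by rw [hsplit]
    _ ≤ eLpNorm (f - f') (ENNReal.ofReal s) μ * eLpNorm g (ENNReal.ofReal t) μ :=
      enorm_integral_inner_le (hf.1.1.sub hf'L.1) hg.1
    _ ≤ 0 + eLpNorm g (ENNReal.ofReal t) μ * ENNReal.ofReal ε := by
      rw [zero_add, mul_comm]
      gcongr

lemma integral_inner_eq_zero_of_mem_lsCl_orthCompl {p q : ℝ} (hqp : q.HolderConjugate p)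
    {α β : X → E} (hβ : β ∈ LsCl μ (OrthCompl μ K) q) (hα : α ∈ LsCl μ K p) :
    ∫ x, ⟪β x, α x⟫ ∂μ = 0 :=
  integral_inner_eq_zero_of_mem_lsCl hqp hβ hα.1 fun _ hh hhq =>
    (integral_congr_ae (ae_of_all _ fun _ => real_inner_comm _ _)).trans <|
      integral_inner_eq_zero_of_mem_lsCl hqp.symm hα hhq fun f hf _ => hh.2 f hf

/-- The relation `u = Π₊ F` of the paper, for `F ∈ L^s`. -/
def IsLsProjection (μ : Measure X) (K : Set (X → E)) (s : ℝ) (F u : X → E) : Prop :=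
  u ∈ LsCl μ K s ∧ F - u ∈ LsCl μ (OrthCompl μ K) s

lemma IsLsProjection.sub (hK : IsClosedL2Subspace μ K) {s : ℝ} (hs : 1 ≤ s)
    {F₁ F₂ u₁ u₂ : X → E} (h₁ : IsLsProjection μ K s F₁ u₁)
    (h₂ : IsLsProjection μ K s F₂ u₂) :
    IsLsProjection μ K s (F₁ - F₂) (u₁ - u₂) := by
  refine ⟨sub_mem_lsCl hs (fun _ hf _ hg => hK.sub_mem hf hg) h₁.1 h₂.1, ?_⟩
  rw [sub_sub_sub_comm]
  exact sub_mem_lsCl hs (fun _ hf _ hg => sub_mem_orthCompl hK.mem_L2 hf hg) h₁.2 h₂.2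

lemma IsLsProjection.integral_inner_eq {p q : ℝ} (hqp : q.HolderConjugate p) {F u α : X → E}
    (h : IsLsProjection μ K q F u) (hF : MemLp F (ENNReal.ofReal q) μ)
    (hα : α ∈ LsCl μ K p) :
    ∫ x, ⟪u x, α x⟫ ∂μ = ∫ x, ⟪F x, α x⟫ ∂μ := by
  have := hqp.ennrealOfReal
  have h0 := integral_inner_eq_zero_of_mem_lsCl_orthCompl hqp h.2 hα
  simp only [Pi.sub_apply, inner_sub_left] at h0
  rw [integral_sub (hF.integrable_inner hα.1) (h.1.1.integrable_inner hα.1)] at h0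
  linarith

lemma ProjBounded.exists_eLpNorm_le (hK : ∀ k ∈ K, MemLp k 2 μ) {s : ℝ} (hs : 1 ≤ s)
    (h : ProjBounded μ K s) :
    ∃ M : ℝ, ∀ F u : X → E, MemLs μ s F → IsLsProjection μ K s F u →
      eLpNorm u (ENNReal.ofReal s) μ ≤ ENNReal.ofReal M * eLpNorm F (ENNReal.ofReal s) μ := by
  obtain ⟨M, hM⟩ := h
  have hs' : 1 ≤ ENNReal.ofReal s := by simpa using hs
  refine ⟨M, fun F u hF hFu => ENNReal.le_of_forall_pos_le_add_mul (c := 2 * ENNReal.ofReal M + 1)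
    (by finiteness) fun ε hε => ?_⟩
  -- approximate `u` by `g ∈ K` and `F - u` by `h ⟂ K`; `g` is the projection of `g + h ∈ L²`
  obtain ⟨g, hgK, hgL, hug⟩ := hFu.1.2 ε hε
  obtain ⟨h, hhK, hhL, hh⟩ := hFu.2.2 ε hε
  have hproj := (hM (g + h) g ((hK g hgK).add hhK.1) (hgL.add hhL) hgK
    (by rwa [add_sub_cancel_left])).1
  have hu :
      eLpNorm u (ENNReal.ofReal s) μ ≤ eLpNorm g (ENNReal.ofReal s) μ + ENNReal.ofReal ε :=
    calc eLpNorm u (ENNReal.ofReal s) μ = eLpNorm (g + (u - g)) (ENNReal.ofReal s) μ := by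
          rw [add_sub_cancel]
      _ ≤ eLpNorm g (ENNReal.ofReal s) μ + eLpNorm (u - g) (ENNReal.ofReal s) μ :=
        eLpNorm_add_le hgL.1 (hFu.1.1.1.sub hgL.1) hs'
      _ ≤ _ := by gcongr
  have hgh : eLpNorm (g + h) (ENNReal.ofReal s) μ ≤
      eLpNorm F (ENNReal.ofReal s) μ + 2 * ENNReal.ofReal ε :=
    calc eLpNorm (g + h) (ENNReal.ofReal s) μ
        = eLpNorm (F - ((u - g) + ((F - u) - h))) (ENNReal.ofReal s) μ := by congr 1; abel
      _ ≤ eLpNorm F (ENNReal.ofReal s) μ + (eLpNorm (u - g) (ENNReal.ofReal s) μ +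
            eLpNorm ((F - u) - h) (ENNReal.ofReal s) μ) :=
        (eLpNorm_sub_le hF.1 ((hFu.1.1.1.sub hgL.1).add (hFu.2.1.1.sub hhL.1)) hs').trans <|
          by gcongr; exact eLpNorm_add_le (hFu.1.1.1.sub hgL.1) (hFu.2.1.1.sub hhL.1) hs'
      _ ≤ _ := by rw [two_mul]; gcongr
  calc eLpNorm u (ENNReal.ofReal s) μ
      ≤ ENNReal.ofReal M * eLpNorm (g + h) (ENNReal.ofReal s) μ + ENNReal.ofReal ε :=
        hu.trans (by gcongr)
    _ ≤ ENNReal.ofReal M * (eLpNorm F (ENNReal.ofReal s) μ + 2 * ENNReal.ofReal ε) +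
          ENNReal.ofReal ε := by gcongr
    _ = _ := by ring

end InnerProduct

namespace IsPStructure

variable {E : Type*} [NormedAddCommGroup E] [InnerProductSpace ℝ E] [MeasurableSpace E]
  {μ : Measure X} {p q CA cA : ℝ} {A : X → E → E}

lemma apply_zero (hA : IsPStructure μ p A CA cA) (hp : p ≠ 1) : ∀ᵐ x ∂μ, A x 0 = 0 := by
  filter_upwards [hA.homog] with x hx
  simpa [Real.zero_rpow (sub_ne_zero.mpr hp)] using hx 0 le_rfl 0

lemma norm_apply_le (hA : IsPStructure μ p A CA cA) (hp : 1 < p) :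
    ∀ᵐ x ∂μ, ∀ v : E, ‖A x v‖ ≤ CA * ‖v‖ ^ (p - 1) := by
  filter_upwards [hA.apply_zero hp.ne', hA.lipschitz] with x h0 hx v
  calc ‖A x v‖ = ‖A x v - A x 0‖ := by rw [h0, sub_zero]
    _ ≤ CA * ((‖v‖ + ‖(0 : E)‖) ^ (p - 2) * ‖v - 0‖) := hx v 0
    _ = CA * ‖v‖ ^ (p - 1) := by
      rw [norm_zero, add_zero, sub_zero, ← Real.rpow_add_one' (norm_nonneg v) (by linarith)]
      ring_nf

lemma memLp_comp [BorelSpace E] [SecondCountableTopology E]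
    (hA : IsPStructure μ p A CA cA) (hpq : p.HolderConjugate q) {u : X → E}
    (hu : MemLp u (ENNReal.ofReal p) μ) :
    MemLp (fun x => A x (u x)) (ENNReal.ofReal q) μ := by
  have hpow : MemLp (fun x => ‖u x‖ ^ (p - 1)) (ENNReal.ofReal q) μ := by
    refine ⟨(hu.1.norm.aemeasurable.pow_const _).aestronglyMeasurable, ?_⟩
    rw [eLpNorm_norm_rpow u hpq.sub_one_pos, ← ENNReal.ofReal_mul hpq.symm.nonneg, mul_comm,
      hpq.sub_one_mul_conj]
    exact ENNReal.rpow_lt_top_of_nonneg hpq.sub_one_pos.le hu.2.ne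
  refine hpow.of_le_mul (c := CA) (aestronglyMeasurable_comp_of_caratheodory hA.measurable_x
    hA.continuous_v hu.1) ?_
  filter_upwards [hA.norm_apply_le hpq.lt] with x hx
  simpa [Real.norm_of_nonneg (Real.rpow_nonneg (norm_nonneg (u x)) _)] using hx (u x)

lemma mul_norm_sub_rpow_le_inner (hA : IsPStructure μ p A CA cA) (hp : 2 ≤ p) (hcA : 0 ≤ cA) :
    ∀ᵐ x ∂μ, ∀ v w : E, cA * ‖v - w‖ ^ p ≤ ⟪A x v - A x w, v - w⟫ := by
  filter_upwards [hA.monotone] with x hx v w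
  refine le_trans ?_ (hx v w)
  gcongr
  calc ‖v - w‖ ^ p = ‖v - w‖ ^ (p - 2) * ‖v - w‖ ^ (2 : ℝ) := by
        rw [← Real.rpow_add' (norm_nonneg _) (by linarith), sub_add_cancel]
    _ ≤ (‖v‖ + ‖w‖) ^ (p - 2) * ‖v - w‖ ^ (2 : ℝ) := by
        gcongr
        exact norm_sub_le v w

lemma mul_eLpNorm_rpow_le_integral_inner [BorelSpace E]
    [SecondCountableTopology E] (hA : IsPStructure μ p A CA cA) (hpq : p.HolderConjugate q)
    (hp : 2 ≤ p) (hcA : 0 ≤ cA) {u v : X → E} (hu : MemLp u (ENNReal.ofReal p) μ)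
    (hv : MemLp v (ENNReal.ofReal p) μ) :
    cA * (eLpNorm (u - v) (ENNReal.ofReal p) μ).toReal ^ p ≤
      ∫ x, ⟪A x (u x) - A x (v x), u x - v x⟫ ∂μ := by
  have := hpq.symm.ennrealOfReal
  rw [← (hu.sub hv).integral_norm_rpow_eq hpq.pos, ← integral_const_mul]
  refine integral_mono_ae ?_ (((hA.memLp_comp hpq hu).sub (hA.memLp_comp hpq hv)).integrable_inner
    (hu.sub hv)) ?_
  · simpa [ENNReal.toReal_ofReal hpq.nonneg] using
      ((hu.sub hv).integrable_norm_rpow (by simpa using hpq.pos) ofReal_ne_top).const_mul cA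
  · filter_upwards [hA.mul_norm_sub_rpow_le_inner hp hcA] with x hx using hx (u x) (v x)

lemma eLpNorm_comp_sub_le (hA : IsPStructure μ p A CA cA) (hpq : p.HolderConjugate q)
    (hp : 2 ≤ p) {u v : X → E} (hu : AEStronglyMeasurable u μ)
    (hv : AEStronglyMeasurable v μ) :
    eLpNorm (fun x => A x (u x) - A x (v x)) (ENNReal.ofReal q) μ ≤
      ‖CA‖ₑ * (eLpNorm (fun x => ‖u x‖ + ‖v x‖) (ENNReal.ofReal p) μ ^ (p - 2) *
        eLpNorm (u - v) (ENNReal.ofReal p) μ) := by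
  have hq : q = p / (p - 2 + 1) := by rw [hpq.conjugate_eq]; ring_nf
  calc eLpNorm (fun x => A x (u x) - A x (v x)) (ENNReal.ofReal q) μ
      ≤ eLpNorm (CA • fun x => ‖‖u x‖ + ‖v x‖‖ ^ (p - 2) * ‖(u - v) x‖)
          (ENNReal.ofReal q) μ := by
        refine eLpNorm_mono_ae ?_
        filter_upwards [hA.lipschitz] with x hx
        have hb : 0 ≤ ‖u x‖ + ‖v x‖ := by positivity
        simpa [abs_of_nonneg hb, abs_mul, abs_of_nonneg (Real.rpow_nonneg hb _)] using
          (hx (u x) (v x)).trans (le_abs_self _)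
    _ ≤ _ := by
        rw [eLpNorm_const_smul, hq]
        gcongr
        exact eLpNorm_norm_rpow_mul_le (by linarith) (by linarith) (hu.norm.add hv.norm) (hu.sub hv)

end IsPStructure

section MintyBrowder

variable {E : Type*} [NormedAddCommGroup E] [InnerProductSpace ℝ E] [MeasurableSpace E]
  [BorelSpace E] [SecondCountableTopology E] {μ : Measure X} {K : Set (X → E)}
  {p q CA cA : ℝ} {A : X → E → E} {a : X → E} {T : (X → E) → (X → E)}

lemma IsPStructure.proj_continuous (hA : IsPStructure μ p A CA cA)
    (hK : IsClosedL2Subspace μ K) (hproj : ProjBounded μ K q) (hpq : p.HolderConjugate q)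
    (hp : 2 ≤ p) (ha : MemLp a (ENNReal.ofReal p) μ)
    (hT : ∀ α ∈ LsCl μ K p, IsLsProjection μ K q (fun x => A x (a x + α x)) (T α))
    {α : X → E} (hα : α ∈ LsCl μ K p) {ε : ℝ} (hε : 0 < ε) :
    ∃ δ : ℝ, 0 < δ ∧ ∀ α' ∈ LsCl μ K p,
      eLpNorm (α' - α) (ENNReal.ofReal p) μ < ENNReal.ofReal δ →
      eLpNorm (T α' - T α) (ENNReal.ofReal q) μ < ENNReal.ofReal ε := by
  obtain ⟨M, hM⟩ := hproj.exists_eLpNorm_le hK.mem_L2 hpq.symm.lt.le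
  have haα := ha.add hα.1
  -- a Lipschitz constant of `T` on the ball of radius `1` around `α`
  set C :=
    ENNReal.ofReal M * ‖CA‖ₑ * (2 * eLpNorm (a + α) (ENNReal.ofReal p) μ + 1) ^ (p - 2)
  have hC : C ≠ ⊤ := by
    have := haα.2.ne
    finiteness
  obtain ⟨δ, hδε, hδ⟩ := (((ENNReal.tendsto_mul_ofReal_nhdsGT_zero hC).eventually
    (gt_mem_nhds (ENNReal.ofReal_pos.2 hε))).and (Ioo_mem_nhdsGT one_pos)).exists
  refine ⟨δ, hδ.1, fun α' hα' hclose => ?_⟩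
  have hsum : eLpNorm (fun x => ‖a x + α' x‖ + ‖a x + α x‖) (ENNReal.ofReal p) μ ≤
      2 * eLpNorm (a + α) (ENNReal.ofReal p) μ + 1 := by
    refine (eLpNorm_norm_add_norm_le (s := ENNReal.ofReal p) haα.1 (ha.add hα'.1).1
      (by simpa using hpq.lt.le)).trans ?_
    rw [add_sub_add_left_eq_sub]
    gcongr
    exact hclose.le.trans (by simpa using hδ.2.le)
  calc eLpNorm (T α' - T α) (ENNReal.ofReal q) μ
      ≤ ENNReal.ofReal M *
          eLpNorm (fun x => A x (a x + α' x) - A x (a x + α x)) (ENNReal.ofReal q) μ :=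
        hM _ _ ((hA.memLp_comp hpq (ha.add hα'.1)).sub (hA.memLp_comp hpq haα))
          ((hT α' hα').sub hK hpq.symm.lt.le (hT α hα))
    _ ≤ ENNReal.ofReal M * (‖CA‖ₑ *
          (eLpNorm (fun x => ‖a x + α' x‖ + ‖a x + α x‖) (ENNReal.ofReal p) μ ^ (p - 2) *
            eLpNorm (α' - α) (ENNReal.ofReal p) μ)) := by
        gcongr
        simpa using hA.eLpNorm_comp_sub_le hpq hp (ha.add hα'.1).1 haα.1
    _ ≤ C * ENNReal.ofReal δ := by
        rw [← mul_assoc, ← mul_assoc]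
        gcongr
        exact mul_le_mul_right (ENNReal.rpow_le_rpow hsum (by linarith)) _
    _ < ENNReal.ofReal ε := hδε

lemma IsPStructure.proj_strictMono (hA : IsPStructure μ p A CA cA)
    (hK : IsClosedL2Subspace μ K) (hpq : p.HolderConjugate q) (hp : 2 ≤ p) (hcA : 0 < cA)
    (ha : MemLp a (ENNReal.ofReal p) μ)
    (hT : ∀ α ∈ LsCl μ K p, IsLsProjection μ K q (fun x => A x (a x + α x)) (T α))
    {α₁ α₂ : X → E} (h₁ : α₁ ∈ LsCl μ K p) (h₂ : α₂ ∈ LsCl μ K p)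
    (hne : ¬α₁ =ᵐ[μ] α₂) :
    0 < ∫ x, ⟪T α₁ x - T α₂ x, α₁ x - α₂ x⟫ ∂μ := by
  have hd : α₁ - α₂ ∈ LsCl μ K p :=
    sub_mem_lsCl hpq.lt.le (fun _ hf _ hg => hK.sub_mem hf hg) h₁ h₂
  have hne0 : eLpNorm (α₁ - α₂) (ENNReal.ofReal p) μ ≠ 0 := by
    rwa [Ne, eLpNorm_eq_zero_iff hd.1.1 (by simpa using hpq.pos), ← eventuallyEq_iff_sub]
  have hpos : 0 < (eLpNorm (α₁ - α₂) (ENNReal.ofReal p) μ).toReal :=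
    ENNReal.toReal_pos hne0 hd.1.2.ne
  have hmono := hA.mul_eLpNorm_rpow_le_integral_inner hpq hp hcA.le (ha.add h₁.1) (ha.add h₂.1)
  simp only [Pi.add_apply, add_sub_add_left_eq_sub] at hmono
  calc 0 < cA * (eLpNorm (α₁ - α₂) (ENNReal.ofReal p) μ).toReal ^ p := by positivity
    _ ≤ ∫ x, ⟪A x (a x + α₁ x) - A x (a x + α₂ x), α₁ x - α₂ x⟫ ∂μ := hmono
    _ = ∫ x, ⟪T α₁ x - T α₂ x, α₁ x - α₂ x⟫ ∂μ :=
      (((hT α₁ h₁).sub hK hpq.symm.lt.le (hT α₂ h₂)).integral_inner_eq hpq.symm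
        ((hA.memLp_comp hpq (ha.add h₁.1)).sub (hA.memLp_comp hpq (ha.add h₂.1))) hd).symm

lemma IsPStructure.proj_coercive (hA : IsPStructure μ p A CA cA) (hpq : p.HolderConjugate q)
    (hp : 2 ≤ p) (hcA : 0 < cA) (ha : MemLp a (ENNReal.ofReal p) μ)
    (hT : ∀ α ∈ LsCl μ K p, IsLsProjection μ K q (fun x => A x (a x + α x)) (T α))
    (M : ℝ) :
    ∃ R : ℝ, ∀ α ∈ LsCl μ K p, R ≤ (eLpNorm α (ENNReal.ofReal p) μ).toReal →
      M * (eLpNorm α (ENNReal.ofReal p) μ).toReal ≤ ∫ x, ⟪T α x, α x⟫ ∂μ := by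
  have := hpq.symm.ennrealOfReal
  have hAa := hA.memLp_comp hpq ha
  obtain ⟨R, hR⟩ := exists_mul_le_mul_rpow_sub_mul hcA hpq.lt M
    (eLpNorm (fun x => A x (a x)) (ENNReal.ofReal q) μ).toReal
  refine ⟨R, fun α hα hRα => ?_⟩
  have hAα := hA.memLp_comp hpq (ha.add hα.1)
  have hmono := hA.mul_eLpNorm_rpow_le_integral_inner hpq hp hcA.le (ha.add hα.1) ha
  simp only [Pi.add_apply, add_sub_cancel_left] at hmono
  have hlin := (abs_le.mp (abs_integral_inner_le hAa hα.1)).1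
  calc M * (eLpNorm α (ENNReal.ofReal p) μ).toReal
      ≤ ∫ x, ⟪A x (a x + α x) - A x (a x), α x⟫ ∂μ +
          ∫ x, ⟪A x (a x), α x⟫ ∂μ := by
        linarith [hR _ hRα]
    _ = ∫ x, ⟪A x (a x + α x), α x⟫ ∂μ := by
        rw [← integral_add (f := fun x => ⟪A x (a x + α x) - A x (a x), α x⟫)
          ((hAα.sub hAa).integrable_inner hα.1) (hAa.integrable_inner hα.1)]
        simp only [← inner_add_left, sub_add_cancel]
    _ = ∫ x, ⟪T α x, α x⟫ ∂μ := ((hT α hα).integral_inner_eq hpq.symm hAα hα).symm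

end MintyBrowder

theorem minty_browder_operator_properties_general
    (μ : Measure X)
    (K : Set (X → V)) (hK : IsClosedL2Subspace μ K)
    (𝔮 : ℝ) (𝔭 : ℝ≥0∞)
    (hproj : ∀ s : ℝ, 𝔮 < s → ENNReal.ofReal s < 𝔭 → ProjBounded μ K s)
    (p q : ℝ) (hp : 1 < p) (hpq : 1 / p + 1 / q = 1)
    (h𝔮q : 𝔮 < q) (hqp : q ≤ p) (hp𝔭 : ENNReal.ofReal p < 𝔭)
    (A : X → V → V) (CA cA : ℝ) (hcA : 0 < cA)
    (hA : IsPStructure μ p A CA cA)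
    (a : X → V) (ha : MemLs μ p a)
    (T : (X → V) → (X → V))
    (hT : ∀ α ∈ LsCl μ K p, T α ∈ LsCl μ K q ∧
      ((fun x => A x (a x + α x)) - T α) ∈ LsCl μ (OrthCompl μ K) q) :
    (∀ α ∈ LsCl μ K p, ∀ ε : ℝ, 0 < ε → ∃ δ : ℝ, 0 < δ ∧
      ∀ α' ∈ LsCl μ K p,
        eLpNorm (α' - α) (ENNReal.ofReal p) μ < ENNReal.ofReal δ →
        eLpNorm (T α' - T α) (ENNReal.ofReal q) μ < ENNReal.ofReal ε) ∧
    (∀ α₁ ∈ LsCl μ K p, ∀ α₂ ∈ LsCl μ K p, ¬ α₁ =ᵐ[μ] α₂ →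
      0 < ∫ x, ⟪T α₁ x - T α₂ x, α₁ x - α₂ x⟫ ∂μ) ∧
    (∀ M : ℝ, ∃ R : ℝ, ∀ α ∈ LsCl μ K p,
      R ≤ (eLpNorm α (ENNReal.ofReal p) μ).toReal →
      M * (eLpNorm α (ENNReal.ofReal p) μ).toReal ≤ ∫ x, ⟪T α x, α x⟫ ∂μ) := by
  have hHolder : p.HolderConjugate q := Real.holderConjugate_iff.mpr ⟨hp, by simpa using hpq⟩
  have hp2 : 2 ≤ p := hHolder.two_le_of_le hqp
  have hprojq : ProjBounded μ K q :=
    hproj q h𝔮q ((ENNReal.ofReal_le_ofReal hqp).trans_lt hp𝔭)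
  exact ⟨fun α hα ε hε => hA.proj_continuous hK hprojq hHolder hp2 ha hT hα hε,
    fun α₁ h₁ α₂ h₂ => hA.proj_strictMono hK hHolder hp2 hcA ha hT h₁ h₂,
    hA.proj_coercive hHolder hp2 hcA ha hT⟩

/-- the Minty–Browder operator `T`.  Let `𝔄` be a `p`-structure and fix
`a ∈ L^p(X,V)`.  Let `T : L^p_+(X) → L^q_+(X)` be the map `Tα = Π₊(𝔄(·, a+α))`, encoded
here by the defining property that `Tα ∈ L^q_+(X)` with `𝔄(·, a+α) − Tα ∈ L^q_-(X)`.
Then `T` is (1) continuous, (2) strictly monotone and (3) coercive. -/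
theorem minty_browder_operator_properties
    (μ : Measure X) [SigmaFinite μ]
    (K : Set (X → V)) (hK : IsClosedL2Subspace μ K)
    (𝔮 : ℝ) (𝔭 : ℝ≥0∞) (h𝔮₁ : 1 ≤ 𝔮) (h𝔮₂ : 𝔮 < 2) (h𝔭 : 2 < 𝔭)
    (hconj : (ENNReal.ofReal 𝔮)⁻¹ + 𝔭⁻¹ = 1)
    (hproj : ∀ s : ℝ, 𝔮 < s → ENNReal.ofReal s < 𝔭 → ProjBounded μ K s)
    (p q : ℝ) (hp : 1 < p) (hpq : 1 / p + 1 / q = 1)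
    (h𝔮q : 𝔮 < q) (hqp : q ≤ p) (hp𝔭 : ENNReal.ofReal p < 𝔭)
    (A : X → V → V) (CA cA : ℝ) (hCA : 0 < CA) (hcA : 0 < cA)
    (hA : IsPStructure μ p A CA cA)
    (a : X → V) (ha : MemLs μ p a)
    (T : (X → V) → (X → V))
    (hT : ∀ α ∈ LsCl μ K p, T α ∈ LsCl μ K q ∧
      ((fun x => A x (a x + α x)) - T α) ∈ LsCl μ (OrthCompl μ K) q) :
    (∀ α ∈ LsCl μ K p, ∀ ε : ℝ, 0 < ε → ∃ δ : ℝ, 0 < δ ∧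
      ∀ α' ∈ LsCl μ K p,
        eLpNorm (α' - α) (ENNReal.ofReal p) μ < ENNReal.ofReal δ →
        eLpNorm (T α' - T α) (ENNReal.ofReal q) μ < ENNReal.ofReal ε) ∧
    (∀ α₁ ∈ LsCl μ K p, ∀ α₂ ∈ LsCl μ K p, ¬ α₁ =ᵐ[μ] α₂ →
      0 < ∫ x, ⟪T α₁ x - T α₂ x, α₁ x - α₂ x⟫ ∂μ) ∧
    (∀ M : ℝ, ∃ R : ℝ, ∀ α ∈ LsCl μ K p,
      R ≤ (eLpNorm α (ENNReal.ofReal p) μ).toReal →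
      M * (eLpNorm α (ENNReal.ofReal p) μ).toReal ≤ ∫ x, ⟪T α x, α x⟫ ∂μ) :=
  minty_browder_operator_properties_general μ K hK 𝔮 𝔭 hproj p q hp hpq h𝔮q hqp hp𝔭 A CA cA hcA hA a
    ha T hT
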